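/- arXiv:1104.3664 — 2 statements merged into one kernel-verified Lean document; each statement's English description precedes it below -/
import Mathlib

section
/- Let g be a real power series with α(g) < ∞ and let k ≥ 1. Then for every finite subset G_n ⊆ G, |Tr(K_n(g)^k) − Tr(K_n(g^k))| ≤ δ_n · ((k−1)/2) · α(g)^k, where g^k denotes the k-th Cauchy power of the power series g. Consequently, if (G_n) is a sequence of finite subsets with δ_n/m_n → 0, then (1/m_n)(Tr(K_n(g)^k) − Tr(K_n(g^k))) → 0 as n → ∞. -/
open scoped BigOperators Classical
open MeasureTheory Filter ProbabilityTheory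

noncomputable section

variable {G : Type*}

/-- Entrywise powers of the kernel `W`. -/
def Wpow (W : G → G → ℝ) : ℕ → G → G → ℝ
  | 0 => fun i j => if i = j then (1 : ℝ) else 0
  | (h + 1) => fun i j => ∑' k, W i k * Wpow W h k j

/-- The infinite matrix `K(f)` associated to a power series `f`. -/
def Kmat (W : G → G → ℝ) (f : ℕ → ℝ) (i j : G) : ℝ :=
  ∑' h, f h * Wpow W h i j

/-- The finite matrix `K_n(f)`, the restriction of `K(f)` to a finite subset. -/
def Kn (W : G → G → ℝ) (f : ℕ → ℝ) (Gn : Finset G) : Matrix Gn Gn ℝ :=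
  Matrix.of fun i j => Kmat W f (i : G) (j : G)

/-- The regularity factor `α(f) = Σ_h |f_h| (h+1)`. -/
def regFactor (f : ℕ → ℝ) : ℝ := ∑' h, |f h| * (h + 1 : ℝ)

/-- `‖f‖_{1,pol} = Σ_h |f_h|`. -/
def polNorm (f : ℕ → ℝ) : ℝ := ∑' h, |f h|

/-- Cauchy product of power series. -/
def cauchy (f g : ℕ → ℝ) (h : ℕ) : ℝ :=
  ∑ k ∈ Finset.range (h + 1), f k * g (h - k)

/-- The unit power series (`1`). -/
def cauchyOne : ℕ → ℝ := fun h => if h = 0 then 1 else 0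

/-- `k`-th Cauchy power of a power series. -/
def cauchyPow (g : ℕ → ℝ) : ℕ → ℕ → ℝ
  | 0 => cauchyOne
  | (k + 1) => cauchy g (cauchyPow g k)

/-- `δ_n`: the cardinality of the boundary of `G_n`. -/
def boundary (W : G → G → ℝ) (Gn : Finset G) : ℕ :=
  ({i | i ∈ Gn ∧ ∃ j, j ∉ Gn ∧ W i j ≠ 0} : Set G).ncard

/-- The block norm `b_n(B) = (1/δ_n) Σ_{i,j} |B(i,j)|`. -/
def blockNorm (W : G → G → ℝ) (Gn : Finset G) (B : Matrix Gn Gn ℝ) : ℝ :=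
  (1 / (boundary W Gn : ℝ)) * ∑ i, ∑ j, |B i j|

/-- Evaluation of a power series at a point. -/
def fEval (f : ℕ → ℝ) (x : ℝ) : ℝ := ∑' h, f h * x ^ h

/-- The class `F_ρ`: positive on `[-1,1]`, with `log f` admitting a power series
expansion on `[-1,1]` whose regularity factor is at most `ρ`. -/
def memF (ρ : ℝ) (f : ℕ → ℝ) : Prop :=
  Summable (fun h => |f h|) ∧
  (∀ x ∈ Set.Icc (-1 : ℝ) 1, 0 < fEval f x) ∧
  ∃ g : ℕ → ℝ, Summable (fun h => |g h| * (h + 1 : ℝ)) ∧ regFactor g ≤ ρ ∧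
    ∀ x ∈ Set.Icc (-1 : ℝ) 1, Real.log (fEval f x) = fEval g x

/-- The standing hypotheses on the kernel `W`: symmetry, degree bounded by `D`,
and entries bounded by `1/D`. -/
def KernelHyp (W : G → G → ℝ) (D : ℕ) : Prop :=
  (∀ i j, W i j = W j i) ∧
  (∀ i, ({j | W i j ≠ 0} : Set G).Finite) ∧
  (∀ i, ({j | W i j ≠ 0} : Set G).ncard ≤ D) ∧
  (∀ i j, |W i j| ≤ 1 / (D : ℝ))


/-!
Write `K = K(g)` and `P` for the coordinate projection onto `G_n`. Since `K(g^k) = K^k` as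
infinite matrices, the difference of traces is `Tr(P K^k P) - Tr((P K P)^k)`, which telescopes
into `∑_{t<k} Tr((P K P)^t · P K (1 - P) · K^(k-1-t))`. An entry `K(a, b)` with `a ∈ G_n`,
`b ∉ G_n` only collects walks of `W` that leave `G_n`; cutting such a walk at the vertex from
which it first leaves, a boundary vertex, bounds each of these traces by `δ_n · A · S^(k-1)`,
where `A = ∑_h h |g_h|` and `S = ∑_h |g_h|`. Finally `k A S^(k-1) ≤ ((k-1)/2) (A + S)^k` for
`k ≥ 2`, and for `k = 1` the two traces agree.

The estimates are made entrywise on `ℝ≥0∞`-valued majorants, where infinite sums can be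
rearranged freely; their finiteness gives the summability behind the real identities.
-/

open ENNReal Finset

section KernelAlgebra

variable {R : Type*} [Semiring R] [TopologicalSpace R]

def kmul (X Y : G → G → R) : G → G → R := fun i j => ∑' c, X i c * Y c j

def kone : G → G → R := fun i j => if i = j then 1 else 0

def kpow (X : G → G → R) : ℕ → G → G → R
  | 0 => kone
  | n + 1 => kmul X (kpow X n)

def restrictCols (S : Set G) (X : G → G → R) : G → G → R := fun i j => S.indicator (X i) j

lemma Wpow_eq_kpow (W : G → G → ℝ) : Wpow W = kpow W := by
  funext h
  induction h with
  | zero => rfl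
  | succ h ih => simp only [Wpow, kpow, ih]; rfl

lemma kone_kmul (X : G → G → R) : kmul kone X = X := by
  funext i j
  rw [kmul, tsum_eq_single i fun c hc => by simp [kone, Ne.symm hc]]
  simp [kone]

lemma kpow_restrictCols_eq_zero {S : Set G} (X : G → G → R) {i c : G} (hi : i ∈ S)
    (hc : c ∉ S) : ∀ t, kpow (restrictCols S X) t i c = 0
  | 0 => if_neg fun h : i = c => hc (h ▸ hi)
  | t + 1 => by
    refine (tsum_congr fun d => ?_).trans tsum_zero
    by_cases hd : d ∈ S
    · rw [kpow_restrictCols_eq_zero X hd hc t, mul_zero]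
    · rw [restrictCols, Set.indicator_of_notMem hd, zero_mul]

end KernelAlgebra

section ENNRealKernels

variable {X X' Y Y' : G → G → ℝ≥0∞}

lemma kmul_assoc (X Y Z : G → G → ℝ≥0∞) : kmul (kmul X Y) Z = kmul X (kmul Y Z) := by
  funext i j
  simp only [kmul, ← ENNReal.tsum_mul_right, ← ENNReal.tsum_mul_left, mul_assoc]
  exact ENNReal.tsum_comm

lemma kmul_mono (hX : X ≤ X') (hY : Y ≤ Y') : kmul X Y ≤ kmul X' Y' :=
  fun i j => ENNReal.tsum_le_tsum fun c => mul_le_mul' (hX i c) (hY c j)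

lemma kpow_mono (hX : X ≤ X') : ∀ n, kpow X n ≤ kpow X' n
  | 0 => le_rfl
  | n + 1 => kmul_mono hX (kpow_mono hX n)

lemma kmul_add (X Y Z : G → G → ℝ≥0∞) : kmul X (Y + Z) = kmul X Y + kmul X Z := by
  funext i j
  simp only [kmul, Pi.add_apply, mul_add, ENNReal.tsum_add]

lemma kmul_sum {ι : Type*} (X : G → G → ℝ≥0∞) (s : Finset ι) (Y : ι → G → G → ℝ≥0∞) :
    kmul X (∑ t ∈ s, Y t) = ∑ t ∈ s, kmul X (Y t) := by
  induction s using Finset.cons_induction with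
  | empty => funext i j; simp [kmul]
  | cons a s ha ih => rw [sum_cons, sum_cons, kmul_add, ih]

lemma tsum_kmul_le {r s : ℝ≥0∞} (hX : ∀ i, ∑' j, X i j ≤ r) (hY : ∀ i, ∑' j, Y i j ≤ s)
    (i : G) : ∑' j, kmul X Y i j ≤ r * s :=
  calc ∑' j, kmul X Y i j = ∑' c, X i c * ∑' j, Y c j := by
        simp only [kmul, ← ENNReal.tsum_mul_left]; exact ENNReal.tsum_comm
    _ ≤ ∑' c, X i c * s := by gcongr with c; exact hY c
    _ ≤ r * s := by rw [ENNReal.tsum_mul_right]; gcongr; exact hX i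

lemma tsum_kone (i : G) : ∑' j, (kone : G → G → ℝ≥0∞) i j = 1 := by
  rw [tsum_eq_single i fun j hj => by simp [kone, Ne.symm hj]]
  simp [kone]

lemma tsum_kpow_le {r : ℝ≥0∞} (hX : ∀ i, ∑' j, X i j ≤ r) :
    ∀ n i, ∑' j, kpow X n i j ≤ r ^ n
  | 0, i => (tsum_kone i).le.trans (pow_zero r).ge
  | n + 1, i => (tsum_kmul_le hX (tsum_kpow_le hX n) i).trans (pow_succ' r n).ge

lemma le_of_tsum_le {r : ℝ≥0∞} (hX : ∀ i, ∑' j, X i j ≤ r) (i j : G) : X i j ≤ r :=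
  (ENNReal.le_tsum j).trans (hX i)

/-- Discrete Duhamel principle, as an inequality. -/
lemma le_sum_kmul_kpow {d Y : ℕ → G → G → ℝ≥0∞} (h0 : d 0 = 0)
    (hd : ∀ m, d (m + 1) ≤ kmul X (d m) + Y m) :
    ∀ m, d m ≤ ∑ t ∈ range m, kmul (kpow X t) (Y (m - 1 - t))
  | 0 => h0.le
  | m + 1 => by
    calc d (m + 1) ≤ kmul X (∑ t ∈ range m, kmul (kpow X t) (Y (m - 1 - t))) + Y m :=
          (hd m).trans (add_le_add_left (kmul_mono le_rfl (le_sum_kmul_kpow h0 hd m)) _)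
      _ = ∑ t ∈ range (m + 1), kmul (kpow X t) (Y (m + 1 - 1 - t)) := by
          rw [sum_range_succ', kmul_sum]
          simp only [← kmul_assoc, kpow, kone_kmul]
          congr 1
          refine sum_congr rfl fun t ht => ?_
          rw [show m + 1 - 1 - (t + 1) = m - 1 - t by omega]

end ENNRealKernels

section RealKernels

def kabs (X : G → G → ℝ) : G → G → ℝ≥0∞ := fun i j => ‖X i j‖ₑ

lemma kabs_kmul_le (X Y : G → G → ℝ) : kabs (kmul X Y) ≤ kmul (kabs X) (kabs Y) :=
  fun i j => enorm_tsum_le_tsum_enorm.trans_eq (by simp only [enorm_mul]; rfl)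

lemma kabs_kpow_le (X : G → G → ℝ) : ∀ n, kabs (kpow X n) ≤ kpow (kabs X) n
  | 0 => fun i j => by by_cases h : i = j <;> simp [kabs, kpow, kone, h]
  | n + 1 => (kabs_kmul_le _ _).trans (kmul_mono le_rfl (kabs_kpow_le X n))

lemma summable_of_enorm_le {ι : Type*} {f : ι → ℝ} {F : ι → ℝ≥0∞} (h : ∀ i, ‖f i‖ₑ ≤ F i)
    (hF : ∑' i, F i ≠ ∞) : Summable f :=
  (tsum_enorm_ne_top_iff_summable_norm.1 (ne_top_of_le_ne_top hF (ENNReal.tsum_le_tsum h))).of_norm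

lemma kmul_assoc_apply {X Y Z : G → G → ℝ} {i j : G}
    (h : ∑' p : G × G, kabs X i p.1 * kabs Y p.1 p.2 * kabs Z p.2 j ≠ ∞) :
    kmul (kmul X Y) Z i j = kmul X (kmul Y Z) i j := by
  have hs : Summable (Function.uncurry fun c m => X i c * (Y c m * Z m j)) :=
    summable_of_enorm_le (fun ⟨c, m⟩ => le_of_eq (by simp [kabs, enorm_mul, mul_assoc])) h
  simp only [kmul, ← tsum_mul_right, ← tsum_mul_left, mul_assoc]
  exact hs.tsum_comm

variable {X : G → G → ℝ}

lemma kabs_kpow_le_one (hX : ∀ i, ∑' j, kabs X i j ≤ 1) (n : ℕ) (i j : G) :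
    kabs (kpow X n) i j ≤ 1 :=
  (kabs_kpow_le X n i j).trans (by simpa using le_of_tsum_le (tsum_kpow_le hX n) i j)

lemma kpow_add (hX : ∀ i, ∑' j, kabs X i j ≤ 1) (a b : ℕ) :
    kpow X (a + b) = kmul (kpow X a) (kpow X b) := by
  induction a with
  | zero => rw [zero_add]; exact (kone_kmul _).symm
  | succ a ih =>
    funext i j
    rw [Nat.add_right_comm]
    refine (congrArg (kmul X · i j) ih).trans
      (kmul_assoc_apply (ne_top_of_le_ne_top one_ne_top ?_)).symm
    calc ∑' p : G × G, kabs X i p.1 * kabs (kpow X a) p.1 p.2 * kabs (kpow X b) p.2 j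
        ≤ ∑' p : G × G, kabs X i p.1 * kpow (kabs X) a p.1 p.2 := by
          refine ENNReal.tsum_le_tsum fun p => ?_
          exact (mul_le_mul' (mul_le_mul' le_rfl (kabs_kpow_le X a _ _))
            (kabs_kpow_le_one hX b _ _)).trans_eq (mul_one _)
      _ = ∑' m, kpow (kabs X) (a + 1) i m := by
          rw [ENNReal.tsum_prod', ENNReal.tsum_comm]; rfl
      _ ≤ 1 := by simpa using tsum_kpow_le hX (a + 1) i

end RealKernels

lemma ENNReal.tsum_sum_range_mul (x y : ℕ → ℝ≥0∞) :
    ∑' n, ∑ k ∈ range (n + 1), x k * y (n - k) = (∑' n, x n) * ∑' n, y n := by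
  simp_rw [← Nat.sum_antidiagonal_eq_sum_range_succ fun k l => x k * y l, ← Finset.tsum_subtype,
    ← ENNReal.tsum_mul_right, ← ENNReal.tsum_mul_left]
  rw [← ENNReal.tsum_prod, ← (Finset.HasAntidiagonal.sigmaAntidiagonalEquivProd (A := ℕ)).tsum_eq]
  exact (ENNReal.tsum_sigma' (fun p : Σ n, antidiagonal n => x p.2.1.1 * y p.2.1.2)).symm

lemma ENNReal.tsum_finsetSum {α ι : Type*} (s : Finset ι) (f : ι → α → ℝ≥0∞) :
    ∑' a, ∑ i ∈ s, f i a = ∑ i ∈ s, ∑' a, f i a :=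
  Summable.tsum_finsetSum fun _ _ => ENNReal.summable

section PowerSeries

variable {W : G → G → ℝ}

lemma norm_kpow_le_one (hW : ∀ i, ∑' j, kabs W i j ≤ 1) (n : ℕ) (i j : G) :
    ‖kpow W n i j‖ ≤ 1 :=
  ENNReal.ofReal_le_one.1 ((ofReal_norm _).trans_le (kabs_kpow_le_one hW n i j))

lemma summable_norm_mul_kpow (hW : ∀ i, ∑' j, kabs W i j ≤ 1) {f : ℕ → ℝ}
    (hf : Summable (‖f ·‖)) (i j : G) : Summable fun n => ‖f n * kpow W n i j‖ :=
  hf.of_nonneg_of_le (fun _ => norm_nonneg _) fun n => by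
    rw [norm_mul]; exact mul_le_of_le_one_right (norm_nonneg _) (norm_kpow_le_one hW n i j)

lemma kmul_kpow_kabs_le_one (hW : ∀ i, ∑' j, kabs W i j ≤ 1) (a b : ℕ) (i j : G) :
    kmul (kpow (kabs W) a) (kpow (kabs W) b) i j ≤ 1 := by
  simpa using le_of_tsum_le (tsum_kmul_le (tsum_kpow_le hW a) (tsum_kpow_le hW b)) i j

lemma summable_kpow_mul_kpow (hW : ∀ i, ∑' j, kabs W i j ≤ 1) (a b : ℕ) (i j : G) :
    Summable fun c => kpow W a i c * kpow W b c j :=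
  summable_of_enorm_le (F := fun c => kpow (kabs W) a i c * kpow (kabs W) b c j)
    (fun c => (enorm_mul _ _).trans_le
      (mul_le_mul' (kabs_kpow_le W a i c) (kabs_kpow_le W b c j)))
    (ne_top_of_le_ne_top one_ne_top (kmul_kpow_kabs_le_one hW a b i j))

lemma summable_uncurry_sum_range_mul_kpow (hW : ∀ i, ∑' j, kabs W i j ≤ 1) {f q : ℕ → ℝ}
    (hf : Summable (‖f ·‖)) (hq : Summable (‖q ·‖)) (i j : G) :
    Summable (Function.uncurry fun c h => ∑ a ∈ range (h + 1),
      f a * q (h - a) * (kpow W a i c * kpow W (h - a) c j)) := by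
  refine summable_of_enorm_le (F := fun p => ∑ a ∈ range (p.2 + 1), ‖f a‖ₑ * ‖q (p.2 - a)‖ₑ *
    (kpow (kabs W) a i p.1 * kpow (kabs W) (p.2 - a) p.1 j)) (fun p => ?_) ?_
  · refine (enorm_sum_le _ _).trans (sum_le_sum fun a _ => ?_)
    simp only [enorm_mul]
    gcongr
    exacts [kabs_kpow_le W a i p.1, kabs_kpow_le W _ p.1 j]
  · refine ne_top_of_le_ne_top (mul_ne_top (tsum_enorm_ne_top_iff_summable_norm.2 hf)
      (tsum_enorm_ne_top_iff_summable_norm.2 hq)) ?_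
    rw [← ENNReal.tsum_sum_range_mul, ENNReal.tsum_prod', ENNReal.tsum_comm]
    refine ENNReal.tsum_le_tsum fun h => ?_
    dsimp only
    rw [ENNReal.tsum_finsetSum]
    refine sum_le_sum fun a _ => ?_
    rw [ENNReal.tsum_mul_left]
    exact mul_le_of_le_one_right' (kmul_kpow_kabs_le_one hW a _ i j)

lemma Kmat_cauchy (hW : ∀ i, ∑' j, kabs W i j ≤ 1) {f q : ℕ → ℝ} (hf : Summable (‖f ·‖))
    (hq : Summable (‖q ·‖)) : Kmat W (cauchy f q) = kmul (Kmat W f) (Kmat W q) := by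
  funext i j
  have hfiber (h : ℕ) : ∑' c, ∑ a ∈ range (h + 1),
      f a * q (h - a) * (kpow W a i c * kpow W (h - a) c j) = cauchy f q h * kpow W h i j := by
    rw [Summable.tsum_finsetSum fun a _ => (summable_kpow_mul_kpow hW a _ i j).mul_left _,
      cauchy, sum_mul]
    refine sum_congr rfl fun a ha => ?_
    rw [tsum_mul_left, ← kmul, ← kpow_add hW, Nat.add_sub_cancel' (mem_range_succ_iff.1 ha)]
  rw [Kmat, Wpow_eq_kpow, ← tsum_congr hfiber,
    (summable_uncurry_sum_range_mul_kpow hW hf hq i j).tsum_comm]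
  refine tsum_congr fun c => ?_
  rw [Kmat, Kmat, Wpow_eq_kpow, tsum_mul_tsum_eq_tsum_sum_range_of_summable_norm
    (summable_norm_mul_kpow hW hf i c) (summable_norm_mul_kpow hW hq c j)]
  exact tsum_congr fun h => sum_congr rfl fun a _ => by ring

lemma summable_norm_cauchyPow {g : ℕ → ℝ} (hg : Summable (‖g ·‖)) :
    ∀ m, Summable (‖cauchyPow g m ·‖)
  | 0 => summable_of_ne_finset_zero (s := {0}) fun h hh => by
      simp [cauchyPow, cauchyOne, Finset.mem_singleton.not.1 hh]
  | m + 1 => summable_norm_sum_mul_range_of_summable_norm hg (summable_norm_cauchyPow hg m)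

lemma Kmat_cauchyPow (hW : ∀ i, ∑' j, kabs W i j ≤ 1) {g : ℕ → ℝ} (hg : Summable (‖g ·‖)) :
    ∀ m, Kmat W (cauchyPow g m) = kpow (Kmat W g) m
  | 0 => by
      funext i j
      rw [Kmat, tsum_eq_single 0 fun h hh => by simp [cauchyPow, cauchyOne, hh]]
      simp [cauchyPow, cauchyOne, Wpow, kpow, kone]
  | m + 1 => (Kmat_cauchy hW hg (summable_norm_cauchyPow hg m)).trans
      (by rw [Kmat_cauchyPow hW hg m]; rfl)

lemma cauchyPow_one (g : ℕ → ℝ) : cauchyPow g 1 = g := by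
  funext h
  rw [cauchyPow, cauchy, sum_eq_single h (fun a ha hne => by
      simp [cauchyPow, cauchyOne, Nat.sub_ne_zero_of_lt
        (lt_of_le_of_ne (mem_range_succ_iff.1 ha) hne)])
    (fun hh => absurd (self_mem_range_succ h) hh)]
  simp [cauchyPow, cauchyOne]

end PowerSeries

section FiniteRestriction

variable (W : G → G → ℝ) (f : ℕ → ℝ) (Gn : Finset G)

lemma Kn_pow_apply (m : ℕ) (i j : Gn) :
    (Kn W f Gn ^ m) i j = kpow (restrictCols (↑Gn) (Kmat W f)) m i j := by
  induction m generalizing i with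
  | zero =>
    rw [pow_zero, Matrix.one_apply]
    exact if_congr Subtype.ext_iff rfl rfl
  | succ m ih =>
    rw [pow_succ', Matrix.mul_apply, kpow, kmul,
      tsum_eq_sum (s := Gn) fun c hc => by simp [restrictCols, hc], ← sum_coe_sort Gn]
    refine sum_congr rfl fun c _ => ?_
    rw [ih, restrictCols, Set.indicator_of_mem (by simp)]
    rfl

lemma trace_Kn_pow (m : ℕ) :
    (Kn W f Gn ^ m).trace = ∑ i ∈ Gn, kpow (restrictCols (↑Gn) (Kmat W f)) m i i := by
  rw [Matrix.trace, ← sum_coe_sort Gn]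
  exact sum_congr rfl fun i _ => Kn_pow_apply W f Gn m i i

lemma trace_Kn : (Kn W f Gn).trace = ∑ i ∈ Gn, Kmat W f i i := by
  rw [Matrix.trace, ← sum_coe_sort Gn]
  rfl

end FiniteRestriction

section Telescoping

variable {X : G → G → ℝ} {Y : G → G → ℝ≥0∞} (S : Set G)

lemma kabs_restrictCols_le (hXY : kabs X ≤ Y) : kabs (restrictCols S X) ≤ restrictCols S Y :=
  fun i j => by
    by_cases hj : j ∈ S
    · simpa [kabs, restrictCols, hj] using hXY i j
    · simp [kabs, restrictCols, hj]

lemma kabs_kpow_sub_kpow_restrictCols_succ_le (hXY : kabs X ≤ Y)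
    (hY : ∀ m i j, kpow Y (m + 1) i j ≠ ∞) (m : ℕ) :
    kabs (kpow X (m + 1) - kpow (restrictCols S X) (m + 1)) ≤
      kmul (restrictCols S Y) (kabs (kpow X m - kpow (restrictCols S X) m)) +
        kmul (restrictCols Sᶜ Y) (kpow Y m) := by
  intro i j
  set A := kpow X m
  set B := kpow (restrictCols S X) m
  have hA : kabs A ≤ kpow Y m := (kabs_kpow_le X m).trans (kpow_mono hXY m)
  have hXS : kabs (restrictCols S X) ≤ Y :=
    (kabs_restrictCols_le S hXY).trans fun i j => Set.indicator_le_self S (Y i) j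
  have hB : kabs B ≤ kpow Y m := (kabs_kpow_le _ m).trans (kpow_mono hXS m)
  have hsum {Z U : G → G → ℝ} (hZ : kabs Z ≤ Y) (hU : kabs U ≤ kpow Y m) :
      Summable fun c => Z i c * U c j :=
    summable_of_enorm_le (fun c => (enorm_mul _ _).trans_le (mul_le_mul' (hZ i c) (hU c j)))
      (hY m i j)
  have hsplit : kpow X (m + 1) i j - kpow (restrictCols S X) (m + 1) i j =
      ∑' c, (restrictCols S X i c * (A c j - B c j) + restrictCols Sᶜ X i c * A c j) := by
    rw [kpow, kpow, kmul, kmul, ← (hsum hXY hA).tsum_sub (hsum hXS hB)]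
    refine tsum_congr fun c => ?_
    by_cases hc : c ∈ S
    · simp [restrictCols, hc]
      ring
    · simp [restrictCols, hc]
  simp only [Pi.add_apply, kabs, Pi.sub_apply, hsplit, kmul, ← ENNReal.tsum_add]
  refine enorm_tsum_le_tsum_enorm.trans (ENNReal.tsum_le_tsum fun c => ?_)
  refine (enorm_add_le _ _).trans (add_le_add ?_ ?_) <;> rw [enorm_mul]
  · exact mul_le_mul' (kabs_restrictCols_le S hXY i c) le_rfl
  · exact mul_le_mul' (kabs_restrictCols_le Sᶜ hXY i c) (hA c j)

lemma kabs_kpow_sub_kpow_restrictCols_le (hXY : kabs X ≤ Y)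
    (hY : ∀ m i j, kpow Y (m + 1) i j ≠ ∞) (m : ℕ) :
    kabs (kpow X m - kpow (restrictCols S X) m) ≤
      ∑ t ∈ range m, kmul (kpow (restrictCols S Y) t)
        (kmul (restrictCols Sᶜ Y) (kpow Y (m - 1 - t))) :=
  le_sum_kmul_kpow (by funext i j; simp [kabs, kpow])
    (kabs_kpow_sub_kpow_restrictCols_succ_le S hXY hY) m

end Telescoping

section Boundary

variable (W : G → G → ℝ) (Gn : Finset G)

def boundaryFinset : Finset G := Gn.filter fun i => ∃ j, j ∉ Gn ∧ W i j ≠ 0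

lemma boundary_eq_card : boundary W Gn = (boundaryFinset W Gn).card := by
  rw [boundary, ← Set.ncard_coe_finset]
  congr 1
  ext i
  simp [boundaryFinset]

variable {W Gn}

-- A walk from `a ∈ Gn` to `b ∉ Gn` is cut at the vertex from which it first leaves `Gn`.
lemma kpow_kabs_le_sum_boundary {b : G} (hb : b ∉ Gn) :
    ∀ h {a}, a ∈ Gn → kpow (kabs W) h a b ≤
      ∑ v ∈ boundaryFinset W Gn, ∑ s ∈ range h, kpow (kabs W) s a v * kpow (kabs W) (h - s) v b
  | 0, a, ha => by simp [kpow, kone, show a ≠ b from fun h => hb (h ▸ ha)]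
  | h + 1, a, ha => by
    set E := kabs W
    have hin : ∑' c, (↑Gn : Set G).indicator (fun c => E a c * kpow E h c b) c ≤
        ∑ v ∈ boundaryFinset W Gn, ∑ s ∈ range h, kpow E (s + 1) a v * kpow E (h - s) v b := by
      calc _ ≤ ∑' c, E a c * ∑ v ∈ boundaryFinset W Gn, ∑ s ∈ range h,
              kpow E s c v * kpow E (h - s) v b := by
            refine ENNReal.tsum_le_tsum fun c => ?_
            by_cases hc : c ∈ Gn
            · simpa [hc] using mul_le_mul' le_rfl (kpow_kabs_le_sum_boundary hb h hc)
            · simp [hc]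
        _ = _ := by
            simp only [mul_sum, kpow, kmul, ← ENNReal.tsum_mul_right, mul_assoc,
              ENNReal.tsum_finsetSum]
    have hout : ∑' c, (↑Gn : Set G)ᶜ.indicator (fun c => E a c * kpow E h c b) c ≤
        ∑ v ∈ boundaryFinset W Gn, kpow E 0 a v * kpow E (h + 1) v b := by
      by_cases ha' : a ∈ boundaryFinset W Gn
      · rw [sum_eq_single_of_mem a ha' fun v _ hv => by simp [kpow, kone, Ne.symm hv]]
        simp only [kpow, kone, if_true, one_mul]
        exact ENNReal.tsum_le_tsum fun c =>
          Set.indicator_le_self _ (fun c => E a c * kpow E h c b) c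
      · refine le_of_eq_of_le (ENNReal.tsum_eq_zero.2 fun c => ?_) zero_le
        by_cases hc : c ∈ Gn
        · simp [hc]
        · have : W a c = 0 := by
            by_contra hW
            exact ha' (mem_filter.2 ⟨ha, c, hc, hW⟩)
          simp [hc, E, kabs, this]
    calc kpow E (h + 1) a b
        = ∑' c, (↑Gn : Set G).indicator (fun c => E a c * kpow E h c b) c +
            ∑' c, (↑Gn : Set G)ᶜ.indicator (fun c => E a c * kpow E h c b) c := by
          rw [← ENNReal.tsum_add]
          exact tsum_congr fun c =>
            (Set.indicator_self_add_compl_apply (↑Gn : Set G)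
              (fun c => E a c * kpow E h c b) c).symm
      _ ≤ _ := add_le_add hin hout
      _ = _ := by
          rw [← sum_add_distrib]
          exact sum_congr rfl fun v _ => by rw [sum_range_succ' _ h]; simp

end Boundary

section Majorant

variable {W : G → G → ℝ} {g : ℕ → ℝ} {Gn : Finset G}

def Kmaj (W : G → G → ℝ) (g : ℕ → ℝ) : G → G → ℝ≥0∞ :=
  fun i j => ∑' h, ‖g h‖ₑ * kpow (kabs W) h i j

lemma kabs_Kmat_le : kabs (Kmat W g) ≤ Kmaj W g := fun i j =>
  enorm_tsum_le_tsum_enorm.trans (ENNReal.tsum_le_tsum fun h => by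
    rw [Wpow_eq_kpow, enorm_mul]
    exact mul_le_mul' le_rfl (kabs_kpow_le W h i j))

lemma tsum_Kmaj_le (hW : ∀ i, ∑' j, kabs W i j ≤ 1) (i : G) :
    ∑' j, Kmaj W g i j ≤ ∑' h, ‖g h‖ₑ := by
  simp only [Kmaj]
  rw [ENNReal.tsum_comm]
  refine ENNReal.tsum_le_tsum fun h => ?_
  rw [ENNReal.tsum_mul_left]
  exact mul_le_of_le_one_right' (by simpa using tsum_kpow_le hW h i)

lemma kmul_restrictCols_compl_Kmaj_le {c : G} (hc : c ∈ Gn) (s : ℕ) (i : G) :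
    kmul (restrictCols (↑Gn)ᶜ (Kmaj W g)) (kpow (Kmaj W g) s) c i ≤
      ∑' h, ‖g h‖ₑ * ∑ v ∈ boundaryFinset W Gn, ∑ r ∈ range h,
        kpow (kabs W) r c v * kmul (kpow (kabs W) (h - r)) (kpow (Kmaj W g) s) v i := by
  calc kmul (restrictCols (↑Gn)ᶜ (Kmaj W g)) (kpow (Kmaj W g) s) c i
      ≤ ∑' b, (∑' h, ‖g h‖ₑ * ∑ v ∈ boundaryFinset W Gn, ∑ r ∈ range h,
          kpow (kabs W) r c v * kpow (kabs W) (h - r) v b) * kpow (Kmaj W g) s b i := by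
        refine ENNReal.tsum_le_tsum fun b => mul_le_mul' ?_ le_rfl
        by_cases hb : b ∈ Gn
        · simp [restrictCols, hb]
        · simpa [restrictCols, hb, Kmaj] using ENNReal.tsum_le_tsum fun h =>
            mul_le_mul' le_rfl (kpow_kabs_le_sum_boundary hb h hc)
    _ = _ := by
        simp only [kmul, mul_sum, sum_mul, ← ENNReal.tsum_mul_left, ← ENNReal.tsum_mul_right,
          mul_assoc]
        rw [ENNReal.tsum_comm]
        simp only [ENNReal.tsum_finsetSum]

lemma kmul_kpow_restrictCols_Kmaj_diag_le (hW : ∀ i, ∑' j, kabs W i j ≤ 1) (t s : ℕ) {i : G}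
    (hi : i ∈ Gn) :
    kmul (kpow (restrictCols (↑Gn) (Kmaj W g)) t)
        (kmul (restrictCols (↑Gn)ᶜ (Kmaj W g)) (kpow (Kmaj W g) s)) i i ≤
      ∑' h, ‖g h‖ₑ * ∑ v ∈ boundaryFinset W Gn, ∑ r ∈ range h,
        (∑' h, ‖g h‖ₑ) ^ t * kmul (kpow (kabs W) (h - r)) (kpow (Kmaj W g) s) v i := by
  set M := Kmaj W g
  set E := kabs W
  set Z : ℕ → G → G → ℝ≥0∞ := fun n => kmul (kpow E n) (kpow M s)
  have hMP : ∀ i, ∑' j, restrictCols (↑Gn) M i j ≤ ∑' h, ‖g h‖ₑ := fun i =>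
    (ENNReal.tsum_le_tsum fun j => Set.indicator_le_self _ _ j).trans (tsum_Kmaj_le hW i)
  calc _ ≤ ∑' c, kpow (restrictCols (↑Gn) M) t i c * ∑' h, ‖g h‖ₑ *
          ∑ v ∈ boundaryFinset W Gn, ∑ r ∈ range h, kpow E r c v * Z (h - r) v i := by
        refine ENNReal.tsum_le_tsum fun c => ?_
        by_cases hc : c ∈ Gn
        · exact mul_le_mul' le_rfl (kmul_restrictCols_compl_Kmaj_le hc s i)
        · simp [kpow_restrictCols_eq_zero M hi hc]
    _ = ∑' h, ‖g h‖ₑ * ∑ v ∈ boundaryFinset W Gn, ∑ r ∈ range h,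
          kmul (kpow (restrictCols (↑Gn) M) t) (kpow E r) i v * Z (h - r) v i := by
        simp only [kmul, mul_sum, ← ENNReal.tsum_mul_left, ← ENNReal.tsum_mul_right]
        rw [ENNReal.tsum_comm]
        simp only [ENNReal.tsum_finsetSum, mul_assoc, mul_left_comm (‖g _‖ₑ)]
    _ ≤ _ := by
        gcongr
        simpa using le_of_tsum_le (tsum_kmul_le (tsum_kpow_le hMP t) (tsum_kpow_le hW _)) i _

lemma sum_kmul_kpow_restrictCols_Kmaj_diag_le (hW : ∀ i, ∑' j, kabs W i j ≤ 1) (t s : ℕ) :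
    ∑ i ∈ Gn, kmul (kpow (restrictCols (↑Gn) (Kmaj W g)) t)
        (kmul (restrictCols (↑Gn)ᶜ (Kmaj W g)) (kpow (Kmaj W g) s)) i i ≤
      (boundaryFinset W Gn).card * (∑' h, ‖g h‖ₑ * h) * (∑' h, ‖g h‖ₑ) ^ (t + s) := by
  set P := ∑' h, ‖g h‖ₑ
  set Z : ℕ → G → G → ℝ≥0∞ := fun n => kmul (kpow (kabs W) n) (kpow (Kmaj W g) s)
  calc _ ≤ ∑ i ∈ Gn, ∑' h, ‖g h‖ₑ * ∑ v ∈ boundaryFinset W Gn, ∑ r ∈ range h,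
          P ^ t * Z (h - r) v i :=
        sum_le_sum fun i hi => kmul_kpow_restrictCols_Kmaj_diag_le hW t s hi
    _ ≤ ∑' h, ‖g h‖ₑ * ∑ v ∈ boundaryFinset W Gn, ∑ r ∈ range h,
          P ^ t * ∑' i, Z (h - r) v i := by
        rw [← ENNReal.tsum_finsetSum]
        refine ENNReal.tsum_le_tsum fun h => ?_
        rw [← mul_sum, sum_comm]
        gcongr with v
        rw [sum_comm]
        gcongr with r
        rw [← mul_sum]
        gcongr
        exact ENNReal.sum_le_tsum _
    _ ≤ ∑' h, ‖g h‖ₑ * ∑ v ∈ boundaryFinset W Gn, ∑ r ∈ range h, P ^ t * P ^ s := by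
        gcongr
        simpa using tsum_kmul_le (tsum_kpow_le hW _) (tsum_kpow_le (tsum_Kmaj_le hW) s) _
    _ = _ := by
        simp only [sum_const, card_range, nsmul_eq_mul, pow_add]
        rw [← ENNReal.tsum_mul_left, ← ENNReal.tsum_mul_right]
        exact tsum_congr fun h => by ring

end Majorant

lemma KernelHyp.tsum_kabs_le_one {W : G → G → ℝ} {D : ℕ} (hker : KernelHyp W D) (i : G) :
    ∑' j, kabs W i j ≤ 1 := by
  obtain ⟨-, hfin, hcard, hle⟩ := hker
  set s := (hfin i).toFinset
  rw [tsum_eq_sum (s := s) fun j hj => by simpa [kabs, s] using hj]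
  have hs : (s.card : ℝ) ≤ D := by
    rw [← Set.ncard_coe_finset, (hfin i).coe_toFinset]; exact_mod_cast hcard i
  calc ∑ j ∈ s, kabs W i j ≤ ∑ j ∈ s, ENNReal.ofReal (1 / D) :=
        sum_le_sum fun j _ => by
          rw [kabs, Real.enorm_eq_ofReal_abs]; exact ofReal_le_ofReal (hle i j)
    _ = ENNReal.ofReal (s.card * (1 / D)) := by
        rw [sum_const, nsmul_eq_mul, ofReal_mul (Nat.cast_nonneg _), ofReal_natCast]
    _ ≤ 1 := by
        refine ofReal_le_one.2 ((mul_le_mul_of_nonneg_right hs (by positivity)).trans ?_)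
        rcases eq_or_ne (D : ℝ) 0 with hD | hD <;> simp [hD]

lemma natCast_mul_mul_pow_sub_one_le {x y : ℝ} (hx : 0 ≤ x) (hy : 0 ≤ y) {k : ℕ} (hk : 2 ≤ k) :
    k * (x * y ^ (k - 1)) ≤ (k - 1) / 2 * (x + y) ^ k := by
  obtain rfl | hk3 := hk.eq_or_lt
  · nlinarith [sq_nonneg (x - y)]
  have hbinom : k * (x * y ^ (k - 1)) ≤ (x + y) ^ k := by
    rw [add_pow]
    refine le_of_eq_of_le ?_ (single_le_sum (f := fun m => x ^ m * y ^ (k - m) * k.choose m)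
      (fun m _ => by positivity) (mem_range.2 (by omega : 1 < k + 1)))
    simp only [pow_one, Nat.choose_one_right]
    ring
  have : (1 : ℝ) ≤ (k - 1) / 2 := by
    have : (3 : ℝ) ≤ k := by exact_mod_cast hk3
    rw [le_div_iff₀ two_pos]; linarith
  nlinarith [pow_nonneg (add_nonneg hx hy) k]

section TraceComparison

variable {W : G → G → ℝ} {g : ℕ → ℝ}

lemma enorm_trace_Kn_pow_sub_le (hW : ∀ i, ∑' j, kabs W i j ≤ 1) (hg : Summable (‖g ·‖))
    (Gn : Finset G) (k : ℕ) :
    ‖(Kn W g Gn ^ k).trace - (Kn W (cauchyPow g k) Gn).trace‖ₑ ≤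
      k * ((boundaryFinset W Gn).card * (∑' h, ‖g h‖ₑ * h) * (∑' h, ‖g h‖ₑ) ^ (k - 1)) := by
  have hP : ∑' h, ‖g h‖ₑ ≠ ∞ := tsum_enorm_ne_top_iff_summable_norm.2 hg
  have hfin (m : ℕ) (i j : G) : kpow (Kmaj W g) (m + 1) i j ≠ ∞ :=
    ne_top_of_le_ne_top (pow_ne_top hP) (le_of_tsum_le (tsum_kpow_le (tsum_Kmaj_le hW) _) i j)
  rw [trace_Kn_pow, trace_Kn, Kmat_cauchyPow hW hg, ← sum_sub_distrib]
  calc _ ≤ ∑ i ∈ Gn, kabs (kpow (Kmat W g) k - kpow (restrictCols (↑Gn) (Kmat W g)) k) i i :=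
        (enorm_sum_le _ _).trans_eq (sum_congr rfl fun i _ => enorm_sub_rev _ _)
    _ ≤ ∑ i ∈ Gn, ∑ t ∈ range k, kmul (kpow (restrictCols (↑Gn) (Kmaj W g)) t)
          (kmul (restrictCols (↑Gn)ᶜ (Kmaj W g)) (kpow (Kmaj W g) (k - 1 - t))) i i :=
        sum_le_sum fun i _ => by
          simpa [Finset.sum_apply] using
            kabs_kpow_sub_kpow_restrictCols_le _ kabs_Kmat_le hfin k i i
    _ ≤ ∑ t ∈ range k, (boundaryFinset W Gn).card * (∑' h, ‖g h‖ₑ * h) *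
          (∑' h, ‖g h‖ₑ) ^ (t + (k - 1 - t)) := by
        rw [sum_comm]
        exact sum_le_sum fun t _ => sum_kmul_kpow_restrictCols_Kmaj_diag_le hW t _
    _ = _ := by
        rw [sum_congr rfl fun t ht => by rw [show t + (k - 1 - t) = k - 1 by
          have := mem_range.1 ht; omega]]
        simp

lemma tsum_enorm_eq_ofReal (hg : Summable fun h => |g h|) :
    ∑' h, ‖g h‖ₑ = ENNReal.ofReal (∑' h, |g h|) := by
  rw [ofReal_tsum_of_nonneg (fun _ => abs_nonneg _) hg]
  simp only [Real.enorm_eq_ofReal_abs]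

lemma tsum_enorm_mul_natCast_eq_ofReal (hg : Summable fun h => |g h| * h) :
    ∑' h, ‖g h‖ₑ * h = ENNReal.ofReal (∑' h, |g h| * h) := by
  rw [ofReal_tsum_of_nonneg (fun _ => by positivity) hg]
  exact tsum_congr fun h => by
    rw [ofReal_mul (abs_nonneg _), Real.enorm_eq_ofReal_abs, ofReal_natCast]

theorem abs_trace_Kn_pow_sub_le (hW : ∀ i, ∑' j, kabs W i j ≤ 1)
    (hg : Summable fun h => |g h| * (h + 1 : ℝ)) {k : ℕ} (hk : 1 ≤ k) (Gn : Finset G) :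
    |(Kn W g Gn ^ k).trace - (Kn W (cauchyPow g k) Gn).trace| ≤
      boundary W Gn * ((k - 1) / 2) * regFactor g ^ k := by
  obtain rfl | hk2 := hk.eq_or_lt
  · simp [cauchyPow_one]
  have hg0 : Summable fun h => |g h| :=
    hg.of_nonneg_of_le (fun _ => abs_nonneg _) fun h =>
      le_mul_of_one_le_right (abs_nonneg _) (by simp)
  have hg1 : Summable fun h => |g h| * h :=
    hg.of_nonneg_of_le (fun _ => by positivity) fun h => by gcongr; linarith
  have hreg : regFactor g = ∑' h, |g h| * h + ∑' h, |g h| := by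
    rw [regFactor, ← hg1.tsum_add hg0]
    exact tsum_congr fun h => by ring
  set a := ∑' h, |g h| * h
  set p := ∑' h, |g h|
  have ha : 0 ≤ a := tsum_nonneg fun _ => by positivity
  have hp : 0 ≤ p := tsum_nonneg fun _ => abs_nonneg _
  have hk1 : (0 : ℝ) ≤ (k - 1) / 2 := by
    have : (1 : ℝ) ≤ k := by exact_mod_cast hk
    linarith
  have hbound := enorm_trace_Kn_pow_sub_le hW (by simpa using hg0) Gn k
  rw [tsum_enorm_mul_natCast_eq_ofReal hg1, tsum_enorm_eq_ofReal hg0, Real.enorm_eq_ofReal_abs,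
    ← boundary_eq_card] at hbound
  rw [hreg, ← ofReal_le_ofReal_iff (by positivity), mul_assoc]
  calc ENNReal.ofReal |_| ≤ _ := hbound
    _ = ENNReal.ofReal (boundary W Gn * (k * (a * p ^ (k - 1)))) := by
        rw [ofReal_mul (by positivity), ofReal_mul (by positivity), ofReal_mul ha, ofReal_pow hp,
          ofReal_natCast, ofReal_natCast]
        ring
    _ ≤ _ := ofReal_le_ofReal (mul_le_mul_of_nonneg_left
        (natCast_mul_mul_pow_sub_one_le ha hp hk2) (Nat.cast_nonneg _))

end TraceComparison

lemma tendsto_one_div_mul_of_abs_le {x δ m : ℕ → ℝ} {C : ℝ} (hx : ∀ n, |x n| ≤ δ n * C)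
    (hm : ∀ n, 0 ≤ m n) (hδ : Tendsto (fun n => δ n / m n) atTop (nhds 0)) :
    Tendsto (fun n => 1 / m n * x n) atTop (nhds 0) := by
  refine squeeze_zero_norm (fun n => ?_) (by simpa using hδ.mul_const C)
  calc ‖1 / m n * x n‖ = |x n| / m n := by
        rw [Real.norm_eq_abs, abs_mul, abs_of_nonneg (one_div_nonneg.2 (hm n)), one_div_mul_eq_div]
    _ ≤ δ n * C / m n := div_le_div_of_nonneg_right (hx n) (hm n)
    _ = δ n / m n * C := div_mul_eq_mul_div _ _ _ |>.symm

theorem stmt4_general {G : Type*} (W : G → G → ℝ) (D : ℕ)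
    (hker : KernelHyp W D)
    (g : ℕ → ℝ) (hg : Summable (fun h => |g h| * (h + 1 : ℝ)))
    (k : ℕ) (hk : 1 ≤ k) :
    (∀ Gn : Finset G,
      |Matrix.trace (Kn W g Gn ^ k) - Matrix.trace (Kn W (cauchyPow g k) Gn)|
        ≤ (boundary W Gn : ℝ) * (((k : ℝ) - 1) / 2) * regFactor g ^ k) ∧
    (∀ GN : ℕ → Finset G,
      Tendsto (fun n => (boundary W (GN n) : ℝ) / ((GN n).card : ℝ)) atTop (nhds 0) →
      Tendsto (fun n => (1 / ((GN n).card : ℝ)) *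
          (Matrix.trace (Kn W g (GN n) ^ k) - Matrix.trace (Kn W (cauchyPow g k) (GN n))))
        atTop (nhds 0)) := by
  have hbound := abs_trace_Kn_pow_sub_le hker.tsum_kabs_le_one hg hk
  exact ⟨hbound, fun GN hGN => tendsto_one_div_mul_of_abs_le
    (fun n => (hbound (GN n)).trans_eq (mul_assoc _ _ _)) (fun n => Nat.cast_nonneg _) hGN⟩

/-- trace comparison. For a power series `g` with `α(g) < ∞` and `k ≥ 1`,
`|Tr(K_n(g)^k) − Tr(K_n(g^k))| ≤ δ_n·((k−1)/2)·α(g)^k` for every finite subset, and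
consequently the normalized difference tends to `0` along any sequence with `δ_n/m_n → 0`. -/
theorem stmt4 {G : Type*} [Countable G] (W : G → G → ℝ) (D : ℕ) (hD : 0 < D)
    (hker : KernelHyp W D)
    (g : ℕ → ℝ) (hg : Summable (fun h => |g h| * (h + 1 : ℝ)))
    (k : ℕ) (hk : 1 ≤ k) :
    (∀ Gn : Finset G,
      |Matrix.trace (Kn W g Gn ^ k) - Matrix.trace (Kn W (cauchyPow g k) Gn)|
        ≤ (boundary W Gn : ℝ) * (((k : ℝ) - 1) / 2) * regFactor g ^ k) ∧
    (∀ GN : ℕ → Finset G,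
      Tendsto (fun n => (boundary W (GN n) : ℝ) / ((GN n).card : ℝ)) atTop (nhds 0) →
      Tendsto (fun n => (1 / ((GN n).card : ℝ)) *
          (Matrix.trace (Kn W g (GN n) ^ k) - Matrix.trace (Kn W (cauchyPow g k) (GN n))))
        atTop (nhds 0)) :=
  stmt4_general W D hker g hg k hk

end
end

section
/- (Exact correction lemma.) Let f and g be real power series with Σ|coefficients| < ∞, and assume that f or g is a polynomial of degree at most P. Then, under Assumption 4, the unbiased quadratic form satisfies Tr(K_n(f)·Q_n(g)) = Tr(K_n(f·g)), where f·g is the Cauchy product of the power series. -/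
open scoped BigOperators Classical
open MeasureTheory Filter ProbabilityTheory

noncomputable section

variable {G : Type*}

/-- Equivalence of pairs of vertices: `μ_{ij} = μ_{kl}` iff `(W^h)(i,j) = (W^h)(k,l)` for all `h`. -/
def muEquiv (W : G → G → ℝ) (i j k l : G) : Prop :=
  ∀ h : ℕ, Wpow W h i j = Wpow W h k l

/-- `distLe W P i j` : the graph distance between `i` and `j` (for the edge set
`{(i,j) : W(i,j) ≠ 0}`) is at most `P`. -/
def distLe (W : G → G → ℝ) : ℕ → G → G → Prop
  | 0, i, j => i = j
  | (P + 1), i, j => distLe W P i j ∨ ∃ m, W i m ≠ 0 ∧ distLe W P m j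

/-- The boundary-correction matrix `B^{(n)}`. -/
def Bmat (W : G → G → ℝ) (P : ℕ) (Gn : Finset G) : Matrix Gn Gn ℝ :=
  Matrix.of fun i j =>
    if distLe W P (i : G) (j : G) then
      (({p : G × G | p.1 ∈ Gn ∧ muEquiv W p.1 p.2 i j} : Set (G × G)).ncard : ℝ) /
      (({p : G × G | p.1 ∈ Gn ∧ p.2 ∈ Gn ∧ muEquiv W p.1 p.2 i j} : Set (G × G)).ncard : ℝ)
    else 1

/-- The unbiased (tapered) matrix `Q_n(g) = B^{(n)} ⊙ K_n(g)`. -/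
def Qn (W : G → G → ℝ) (P : ℕ) (g : ℕ → ℝ) (Gn : Finset G) : Matrix Gn Gn ℝ :=
  Matrix.of fun i j => Bmat W P Gn i j * Kn W g Gn i j

/-- Assumption 4: the set `V_P` of equivalence classes of pairs at distance at most `P`
is finite, and every class is realized by a pair of vertices in `G_n`. -/
def Assumption4 (W : G → G → ℝ) (P : ℕ) (Gn : Finset G) : Prop :=
  ({S : Set (G × G) | ∃ i j : G, distLe W P i j ∧
      S = {p : G × G | muEquiv W p.1 p.2 i j}} : Set (Set (G × G))).Finite ∧
  ∀ i j : G, distLe W P i j → ∃ k ∈ Gn, ∃ l ∈ Gn, muEquiv W k l i j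

/-! Write `v(i,j) = K(f)(i,j) K(g)(i,j)`. By symmetry of `W`, the diagonal entry `K(f·g)(i,i)` is
`Σ_j K(f)(i,j) K(g)(j,i) = Σ_j v(i,j)`, and the degree bound makes this sum finite: `v(i,j) ≠ 0`
forces `(W^h)(i,j) ≠ 0` for some `h ≤ P`, hence `d_G(i,j) ≤ P`. So `Tr K_n(f·g)` sums `v` over
pairs of `G_n × G`, while `Tr(K_n(f) Q_n(g))` sums `B^{(n)} v` over pairs of `G_n × G_n`. As `v`
only depends on the class `c = μ_{ij}`, grouping by classes turns the first sum into
`Σ_c N_c v_c` and the second into `Σ_c M_c (N_c / M_c) v_c`, where `N_c` and `M_c` count the pairs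
of class `c` in `G_n × G` and in `G_n × G_n`; Assumption 4 gives `M_c > 0` whenever `v_c ≠ 0`. -/

lemma exists_ne_zero_of_tsum_ne_zero {β : Type*} {f : β → ℝ} (h : ∑' n, f n ≠ 0) :
    ∃ n, f n ≠ 0 := by
  by_contra! hc
  exact h (by simp [hc])

section Counting

open Finset

lemma sum_comp_eq_sum_card_div_card_mul {α γ : Type*} (R L : Finset α) (κ : α → γ) (φ : γ → ℝ)
    (hL : ∀ p ∈ R, φ (κ p) ≠ 0 → ∃ q ∈ L, κ q = κ p) :
    ∑ p ∈ R, φ (κ p) =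
      ∑ q ∈ L, (#{p ∈ R | κ p = κ q} / #{p ∈ L | κ p = κ q} : ℝ) * φ (κ q) := by
  have hspread : ∀ p ∈ R, φ (κ p) =
      ∑ q ∈ L, if κ q = κ p then φ (κ q) / #{r ∈ L | κ r = κ q} else 0 := fun p hp => by
    rw [← sum_filter, sum_congr rfl fun q hq => by rw [(mem_filter.mp hq).2], sum_const,
      nsmul_eq_mul]
    rcases eq_or_ne (φ (κ p)) 0 with h0 | h0
    · rw [h0, zero_div, mul_zero]
    · obtain ⟨q, hq, hqp⟩ := hL p hp h0
      have : (#{r ∈ L | κ r = κ p} : ℝ) ≠ 0 :=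
        Nat.cast_ne_zero.mpr (card_ne_zero_of_mem (mem_filter.mpr ⟨hq, hqp⟩))
      field_simp
  rw [sum_congr rfl hspread, sum_comm]
  refine sum_congr rfl fun q _ => ?_
  rw [← sum_filter, sum_const, nsmul_eq_mul, filter_congr fun _ _ => eq_comm]
  ring

end Counting

section Kernel

open Finset

variable {W : G → G → ℝ}

lemma Wpow_zero_apply (i j : G) : Wpow W 0 i j = if i = j then 1 else 0 := rfl

lemma Wpow_succ_apply (h : ℕ) (i j : G) : Wpow W (h + 1) i j = ∑' k, W i k * Wpow W h k j := rfl

lemma Wpow_one (i j : G) : Wpow W 1 i j = W i j := by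
  simp [Wpow_succ_apply, Wpow_zero_apply]

lemma distLe_mono {P Q : ℕ} (hPQ : P ≤ Q) {i j : G} (h : distLe W P i j) : distLe W Q i j := by
  induction hPQ with
  | refl => exact h
  | step _ ih => exact Or.inl ih

lemma distLe_of_Wpow_ne_zero : ∀ {h : ℕ} {i j : G}, Wpow W h i j ≠ 0 → distLe W h i j
  | 0, i, j, hW => by
    by_contra hij
    exact hW (if_neg hij)
  | h + 1, i, j, hW => by
    obtain ⟨k, hk⟩ := exists_ne_zero_of_tsum_ne_zero hW
    exact Or.inr ⟨k, left_ne_zero_of_mul hk, distLe_of_Wpow_ne_zero (right_ne_zero_of_mul hk)⟩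

lemma finite_setOf_distLe (hfin : ∀ i, {j | W i j ≠ 0}.Finite) :
    ∀ (P : ℕ) (i : G), {j | distLe W P i j}.Finite
  | 0, i => (Set.finite_singleton i).subset fun j (hj : i = j) => hj.symm
  | P + 1, i => by
    refine ((finite_setOf_distLe hfin P i).union
      ((hfin i).biUnion fun m _ => finite_setOf_distLe hfin P m)).subset ?_
    rintro j (hj | ⟨m, hm, hmj⟩)
    · exact Or.inl hj
    · exact Or.inr (Set.mem_biUnion hm hmj)

lemma finite_support_Wpow (hfin : ∀ i, {j | W i j ≠ 0}.Finite) (h : ℕ) (i : G) :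
    (Function.support (Wpow W h i)).Finite :=
  (finite_setOf_distLe hfin h i).subset fun _ => distLe_of_Wpow_ne_zero

lemma Wpow_succ_eq_sum (hfin : ∀ i, {j | W i j ≠ 0}.Finite) (h : ℕ) (i j : G) :
    Wpow W (h + 1) i j = ∑ k ∈ (hfin i).toFinset, W i k * Wpow W h k j :=
  tsum_eq_sum fun k hk => by
    rw [Set.Finite.mem_toFinset, Set.mem_ofPred_eq, not_not] at hk
    rw [hk, zero_mul]

lemma Wpow_add (hfin : ∀ i, {j | W i j ≠ 0}.Finite) (a b : ℕ) (i j : G) :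
    Wpow W (a + b) i j = ∑' k, Wpow W a i k * Wpow W b k j := by
  induction a generalizing i with
  | zero => simp [Wpow_zero_apply]
  | succ a ih =>
    have hsummable : ∀ k, Summable fun l => W i k * (Wpow W a k l * Wpow W b l j) := fun k =>
      summable_of_hasFiniteSupport <| (finite_support_Wpow hfin a k).subset fun l hl => by
        contrapose! hl
        simp [Function.notMem_support.mp hl]
    calc Wpow W (a + 1 + b) i j
        = ∑ k ∈ (hfin i).toFinset, W i k * ∑' l, Wpow W a k l * Wpow W b l j := by
          rw [Nat.add_right_comm, Wpow_succ_eq_sum hfin]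
          simp only [ih]
      _ = ∑' l, ∑ k ∈ (hfin i).toFinset, W i k * (Wpow W a k l * Wpow W b l j) := by
          rw [Summable.tsum_finsetSum fun k _ => hsummable k]
          simp only [tsum_mul_left]
      _ = ∑' l, Wpow W (a + 1) i l * Wpow W b l j := by
          simp only [Wpow_succ_eq_sum hfin, Finset.sum_mul, mul_assoc]

lemma Wpow_comm (hsym : ∀ i j, W i j = W j i) (hfin : ∀ i, {j | W i j ≠ 0}.Finite) :
    ∀ (h : ℕ) (i j : G), Wpow W h i j = Wpow W h j i
  | 0, i, j => by simp only [Wpow_zero_apply, eq_comm]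
  | h + 1, i, j => by
    rw [Wpow_succ_apply, Wpow_add hfin h 1 j i]
    exact tsum_congr fun k => by rw [Wpow_one, Wpow_comm hsym hfin h k j, hsym, mul_comm]

lemma abs_Wpow_le_one (hfin : ∀ i, {j | W i j ≠ 0}.Finite)
    (hrow : ∀ i (s : Finset G), ∑ k ∈ s, |W i k| ≤ 1) :
    ∀ (h : ℕ) (i j : G), |Wpow W h i j| ≤ 1
  | 0, i, j => by rw [Wpow_zero_apply]; split_ifs <;> norm_num
  | h + 1, i, j => by
    rw [Wpow_succ_eq_sum hfin]
    calc |∑ k ∈ (hfin i).toFinset, W i k * Wpow W h k j|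
        ≤ ∑ k ∈ (hfin i).toFinset, |W i k| * |Wpow W h k j| := by
          simpa only [abs_mul] using Finset.abs_sum_le_sum_abs (fun k => W i k * Wpow W h k j) _
      _ ≤ ∑ k ∈ (hfin i).toFinset, |W i k| := by
          gcongr with k
          exact mul_le_of_le_one_right (abs_nonneg _) (abs_Wpow_le_one hfin hrow h k j)
      _ ≤ 1 := hrow i _

lemma sum_Wpow_mul_Wpow_eq (hsym : ∀ i j, W i j = W j i) (hfin : ∀ i, {j | W i j ≠ 0}.Finite)
    {P a b : ℕ} (hab : a ≤ P ∨ b ≤ P) {i : G} {s : Finset G}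
    (hs : ∀ j, distLe W P i j → j ∈ s) :
    ∑ j ∈ s, Wpow W a i j * Wpow W b j i = Wpow W (a + b) i i := by
  rw [Wpow_add hfin]
  refine (tsum_eq_sum fun j hj => ?_).symm
  have hfar : ∀ c ≤ P, Wpow W c i j = 0 := fun c hc => by
    by_contra hW
    exact hj (hs j (distLe_mono hc (distLe_of_Wpow_ne_zero hW)))
  rcases hab with ha | hb
  · rw [hfar a ha, zero_mul]
  · rw [Wpow_comm hsym hfin b j i, hfar b hb, mul_zero]

lemma Kmat_comm (hsym : ∀ i j, W i j = W j i) (hfin : ∀ i, {j | W i j ≠ 0}.Finite)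
    (f : ℕ → ℝ) (i j : G) : Kmat W f i j = Kmat W f j i :=
  tsum_congr fun h => by rw [Wpow_comm hsym hfin]

lemma KernelHyp.sum_abs_le_one {D : ℕ} (hker : KernelHyp W D) (i : G) (s : Finset G) :
    ∑ k ∈ s, |W i k| ≤ 1 := by
  obtain ⟨-, hfin, hcard, hbd⟩ := hker
  have hsupp : (#{k ∈ s | W i k ≠ 0} : ℝ) ≤ D := by
    rw [← Set.ncard_coe_finset]
    exact_mod_cast (Set.ncard_le_ncard (fun k hk => (mem_filter.mp hk).2) (hfin i)).trans
      (hcard i)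
  calc ∑ k ∈ s, |W i k| = ∑ k ∈ s with W i k ≠ 0, |W i k| :=
        (sum_filter_of_ne fun k _ hk => abs_ne_zero.mp hk).symm
    _ ≤ #{k ∈ s | W i k ≠ 0} * (1 / D) := by
        simpa only [nsmul_eq_mul] using sum_le_card_nsmul _ _ _ fun k _ => hbd i k
    _ ≤ D * (1 / D) := by gcongr
    _ ≤ 1 := by rw [mul_one_div]; exact div_self_le_one _

end Kernel

section Cauchy

open Finset.HasAntidiagonal

variable {W : G → G → ℝ}

lemma summable_norm_mul_Wpow (hWle : ∀ h (i j : G), |Wpow W h i j| ≤ 1) {f : ℕ → ℝ}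
    (hf : Summable fun h => |f h|) (i j : G) : Summable fun h => ‖f h * Wpow W h i j‖ :=
  hf.of_nonneg_of_le (fun _ => norm_nonneg _) fun h => by
    rw [Real.norm_eq_abs, abs_mul]
    exact mul_le_of_le_one_right (abs_nonneg _) (hWle h i j)

lemma Kmat_cauchy_apply_self (hsym : ∀ i j, W i j = W j i)
    (hfin : ∀ i, {j | W i j ≠ 0}.Finite) (hrow : ∀ i (s : Finset G), ∑ k ∈ s, |W i k| ≤ 1)
    {f g : ℕ → ℝ} (hf : Summable fun h => |f h|) (hg : Summable fun h => |g h|) {P : ℕ}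
    (hpoly : (∀ h, P < h → f h = 0) ∨ (∀ h, P < h → g h = 0)) {i : G} {s : Finset G}
    (hs : ∀ j, distLe W P i j → j ∈ s) :
    Kmat W (cauchy f g) i i = ∑ j ∈ s, Kmat W f i j * Kmat W g j i := by
  have hWle := abs_Wpow_le_one hfin hrow
  have hdeg : ∀ a b, f a * g b ≠ 0 → a ≤ P ∨ b ≤ P := fun a b hne => by
    rcases hpoly with hf0 | hg0
    · exact Or.inl (not_lt.mp fun ha => hne (by rw [hf0 a ha, zero_mul]))
    · exact Or.inr (not_lt.mp fun hb => hne (by rw [hg0 b hb, mul_zero]))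
  symm
  calc ∑ j ∈ s, Kmat W f i j * Kmat W g j i
      = ∑ j ∈ s, ∑' n, ∑ p ∈ antidiagonal n,
          f p.1 * Wpow W p.1 i j * (g p.2 * Wpow W p.2 j i) :=
        Finset.sum_congr rfl fun j _ => tsum_mul_tsum_eq_tsum_sum_antidiagonal_of_summable_norm
          (summable_norm_mul_Wpow hWle hf i j) (summable_norm_mul_Wpow hWle hg j i)
    _ = ∑' n, ∑ p ∈ antidiagonal n,
          f p.1 * g p.2 * ∑ j ∈ s, Wpow W p.1 i j * Wpow W p.2 j i := by
        rw [← Summable.tsum_finsetSum fun j _ =>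
          (summable_norm_sum_mul_antidiagonal_of_summable_norm
            (summable_norm_mul_Wpow hWle hf i j) (summable_norm_mul_Wpow hWle hg j i)).of_norm]
        refine tsum_congr fun n => ?_
        rw [Finset.sum_comm]
        refine Finset.sum_congr rfl fun p _ => ?_
        rw [Finset.mul_sum]
        exact Finset.sum_congr rfl fun j _ => by ring
    _ = ∑' n, ∑ p ∈ antidiagonal n, f p.1 * g p.2 * Wpow W n i i :=
        tsum_congr fun n => Finset.sum_congr rfl fun p hp => by
          rcases eq_or_ne (f p.1 * g p.2) 0 with h0 | h0
          · rw [h0, zero_mul, zero_mul]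
          · rw [sum_Wpow_mul_Wpow_eq hsym hfin (hdeg _ _ h0) hs, mem_antidiagonal.mp hp]
    _ = Kmat W (cauchy f g) i i := by
        simp only [Kmat, cauchy, ← Finset.sum_mul,
          Finset.Nat.sum_antidiagonal_eq_sum_range_succ fun a b => f a * g b]

end Cauchy

section Correction

open Finset

variable {W : G → G → ℝ}

def Wprofile (W : G → G → ℝ) (p : G × G) : ℕ → ℝ := fun h => Wpow W h p.1 p.2

lemma muEquiv_iff_Wprofile_eq {i j k l : G} :
    muEquiv W i j k l ↔ Wprofile W (i, j) = Wprofile W (k, l) :=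
  funext_iff.symm

lemma exists_Wpow_ne_zero_of_Kmat_mul_ne_zero {P : ℕ} {f g : ℕ → ℝ}
    (hpoly : (∀ h, P < h → f h = 0) ∨ (∀ h, P < h → g h = 0)) {i j : G}
    (hv : Kmat W f i j * Kmat W g i j ≠ 0) : ∃ h ≤ P, Wpow W h i j ≠ 0 := by
  rcases hpoly with hf0 | hg0
  · obtain ⟨h, hh⟩ := exists_ne_zero_of_tsum_ne_zero (left_ne_zero_of_mul hv)
    exact ⟨h, not_lt.mp fun hP => hh (by rw [hf0 h hP, zero_mul]), right_ne_zero_of_mul hh⟩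
  · obtain ⟨h, hh⟩ := exists_ne_zero_of_tsum_ne_zero (right_ne_zero_of_mul hv)
    exact ⟨h, not_lt.mp fun hP => hh (by rw [hg0 h hP, zero_mul]), right_ne_zero_of_mul hh⟩

lemma distLe_of_Wprofile_eq {P : ℕ} {p q : G × G} (hq : ∃ h ≤ P, Wpow W h q.1 q.2 ≠ 0)
    (hpq : Wprofile W p = Wprofile W q) : distLe W P p.1 p.2 := by
  obtain ⟨h, hP, hW⟩ := hq
  exact distLe_mono hP (distLe_of_Wpow_ne_zero ((congrFun hpq h).trans_ne hW))

lemma Bmat_mul_eq_card_div_card_mul {P : ℕ} {Gn S : Finset G}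
    (hS : ∀ i ∈ Gn, ∀ j, distLe W P i j → j ∈ S) (i j : Gn) {v : ℝ}
    (hv : v ≠ 0 → ∃ h ≤ P, Wpow W h i j ≠ 0) :
    Bmat W P Gn i j * v = (#{p ∈ Gn ×ˢ S | Wprofile W p = Wprofile W (i, j)} /
      #{p ∈ Gn ×ˢ Gn | Wprofile W p = Wprofile W (i, j)} : ℝ) * v := by
  rcases eq_or_ne v 0 with rfl | hv0
  · rw [mul_zero, mul_zero]
  have hnear := hv hv0
  have hR : {p : G × G | p.1 ∈ Gn ∧ muEquiv W p.1 p.2 i j} =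
      ↑({p ∈ Gn ×ˢ S | Wprofile W p = Wprofile W (i, j)}) := by
    ext p
    simp only [Set.mem_ofPred_eq, coe_filter, mem_product, muEquiv_iff_Wprofile_eq]
    exact ⟨fun ⟨hp, hpq⟩ => ⟨⟨hp, hS _ hp _ (distLe_of_Wprofile_eq hnear hpq)⟩, hpq⟩,
      fun ⟨⟨hp, _⟩, hpq⟩ => ⟨hp, hpq⟩⟩
  have hL : {p : G × G | p.1 ∈ Gn ∧ p.2 ∈ Gn ∧ muEquiv W p.1 p.2 i j} =
      ↑({p ∈ Gn ×ˢ Gn | Wprofile W p = Wprofile W (i, j)}) := by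
    ext p
    simp only [Set.mem_ofPred_eq, coe_filter, mem_product, muEquiv_iff_Wprofile_eq, and_assoc]
  have hij : distLe W P i j := distLe_of_Wprofile_eq (p := ((i : G), (j : G))) hnear rfl
  rw [Bmat, Matrix.of_apply, if_pos hij, hR, hL, Set.ncard_coe_finset, Set.ncard_coe_finset]

lemma trace_Kn_cauchy (hsym : ∀ i j, W i j = W j i) (hfin : ∀ i, {j | W i j ≠ 0}.Finite)
    (hrow : ∀ i (s : Finset G), ∑ k ∈ s, |W i k| ≤ 1)
    {f g : ℕ → ℝ} (hf : Summable fun h => |f h|) (hg : Summable fun h => |g h|) {P : ℕ}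
    (hpoly : (∀ h, P < h → f h = 0) ∨ (∀ h, P < h → g h = 0)) {Gn S : Finset G}
    (hS : ∀ i ∈ Gn, ∀ j, distLe W P i j → j ∈ S) :
    Matrix.trace (Kn W (cauchy f g) Gn) =
      ∑ p ∈ Gn ×ˢ S, Kmat W f p.1 p.2 * Kmat W g p.1 p.2 := by
  rw [sum_product, Matrix.trace, ← sum_coe_sort Gn]
  refine Fintype.sum_congr _ _ fun i => ?_
  rw [Matrix.diag_apply, Kn, Matrix.of_apply,
    Kmat_cauchy_apply_self hsym hfin hrow hf hg hpoly (hS i i.2)]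
  exact sum_congr rfl fun j _ => by rw [Kmat_comm hsym hfin g]

lemma trace_Kn_mul_Qn (hsym : ∀ i j, W i j = W j i) (hfin : ∀ i, {j | W i j ≠ 0}.Finite)
    {f g : ℕ → ℝ} {P : ℕ} (hpoly : (∀ h, P < h → f h = 0) ∨ (∀ h, P < h → g h = 0))
    {Gn S : Finset G} (hS : ∀ i ∈ Gn, ∀ j, distLe W P i j → j ∈ S) :
    Matrix.trace (Kn W f Gn * Qn W P g Gn) =
      ∑ q ∈ Gn ×ˢ Gn, (#{p ∈ Gn ×ˢ S | Wprofile W p = Wprofile W q} /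
        #{p ∈ Gn ×ˢ Gn | Wprofile W p = Wprofile W q} : ℝ) *
          (Kmat W f q.1 q.2 * Kmat W g q.1 q.2) := by
  rw [Matrix.trace_mul_comm, sum_product, Matrix.trace, ← sum_coe_sort Gn]
  refine Fintype.sum_congr _ _ fun i => ?_
  rw [Matrix.diag_apply, Matrix.mul_apply, ← sum_coe_sort Gn]
  refine Fintype.sum_congr _ _ fun j => ?_
  rw [Qn, Kn, Kn, Matrix.of_apply, Matrix.of_apply, Matrix.of_apply, Kmat_comm hsym hfin f,
    mul_assoc, mul_comm (Kmat W g _ _)]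
  exact Bmat_mul_eq_card_div_card_mul hS i j (exists_Wpow_ne_zero_of_Kmat_mul_ne_zero hpoly)

end Correction

theorem stmt8_general {G : Type*} (W : G → G → ℝ) (D : ℕ)
    (hker : KernelHyp W D)
    (P : ℕ) (Gn : Finset G)
    (hA4 : Assumption4 W P Gn)
    (f g : ℕ → ℝ)
    (hf : Summable (fun h => |f h|)) (hg : Summable (fun h => |g h|))
    (hpoly : (∀ h, P < h → f h = 0) ∨ (∀ h, P < h → g h = 0)) :
    Matrix.trace (Kn W f Gn * Qn W P g Gn) = Matrix.trace (Kn W (cauchy f g) Gn) := by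
  have hrow := hker.sum_abs_le_one
  obtain ⟨hsym, hfin, -, -⟩ := hker
  set S := Gn.biUnion fun i => (finite_setOf_distLe hfin P i).toFinset
  have hS : ∀ i ∈ Gn, ∀ j, distLe W P i j → j ∈ S := fun i hi j hij =>
    Finset.mem_biUnion.mpr ⟨i, hi, (Set.Finite.mem_toFinset _).mpr hij⟩
  rw [trace_Kn_mul_Qn hsym hfin hpoly hS, trace_Kn_cauchy hsym hfin hrow hf hg hpoly hS]
  -- `φ (Wprofile W p)` unfolds to `Kmat W f p.1 p.2 * Kmat W g p.1 p.2`.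
  refine (sum_comp_eq_sum_card_div_card_mul _ _ (Wprofile W)
    (fun c => (∑' h, f h * c h) * ∑' h, g h * c h) fun p _ hv => ?_).symm
  obtain ⟨k, hk, l, hl, hkl⟩ := hA4.2 p.1 p.2 (distLe_of_Wprofile_eq
    (exists_Wpow_ne_zero_of_Kmat_mul_ne_zero hpoly hv) rfl)
  exact ⟨(k, l), Finset.mem_product.mpr ⟨hk, hl⟩, muEquiv_iff_Wprofile_eq.mp hkl⟩

/-- Exact correction lemma. If `f` or `g` is a polynomial of degree
at most `P`, then under Assumption 4, `Tr(K_n(f)·Q_n(g)) = Tr(K_n(f·g))`. -/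
theorem stmt8 {G : Type*} [Countable G] (W : G → G → ℝ) (D : ℕ) (hD : 0 < D)
    (hker : KernelHyp W D)
    (P : ℕ) (hP : 0 < P) (Gn : Finset G)
    (hA4 : Assumption4 W P Gn)
    (f g : ℕ → ℝ)
    (hf : Summable (fun h => |f h|)) (hg : Summable (fun h => |g h|))
    (hpoly : (∀ h, P < h → f h = 0) ∨ (∀ h, P < h → g h = 0)) :
    Matrix.trace (Kn W f Gn * Qn W P g Gn) = Matrix.trace (Kn W (cauchy f g) Gn) :=
  stmt8_general W D hker P Gn hA4 f g hf hg hpoly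
end
end
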